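/- arXiv:1911.01585 — 3 statements merged into one kernel-verified Lean document; each statement's English description precedes it below -/
import Mathlib

section
/- Let B be Bernoulli on {0,1} and L a real random variable whose conditional densities satisfy p_{L|B}(l|0) = e^{c·l} · (P_B(1)/P_B(0)) · p_{L|B}(l|1) for a constant c > 0 (generalized consistency with scaling ratio c = s_o/s). Then the density of the asymmetric L-value L_a = (-1)^B L satisfies p_{L_a}(-l) / p_{L_a}(l) = e^{-c·l} for all l where p_{L_a}(l) > 0. -/
open Real

/-! The consistency relation says that `P₀ p(l|0) = e^{cl} P₁ p(l|1)`. Substituting it into both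
terms of `p_{L_a}(-l) = P₀ p(-l|0) + P₁ p(l|1)` turns the first term into `e^{-cl} P₁ p(-l|1)` and
the second into `e^{-cl} P₀ p(l|0)`, so `p_{L_a}(-l) = e^{-cl} p_{L_a}(l)`. -/

section Consistency

variable {P0 P1 c : ℝ} {p0 p1 : ℝ → ℝ}

lemma mul_eq_exp_mul_of_consistency (hP0 : P0 ≠ 0)
    (hcons : ∀ l, p0 l = exp (c * l) * (P1 / P0) * p1 l) (l : ℝ) :
    P0 * p0 l = exp (c * l) * (P1 * p1 l) := by
  rw [hcons]
  field_simp

lemma mixture_neg_eq_exp_mul_of_consistency (hP0 : P0 ≠ 0)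
    (hcons : ∀ l, p0 l = exp (c * l) * (P1 / P0) * p1 l) (l : ℝ) :
    P0 * p0 (-l) + P1 * p1 l = exp (-(c * l)) * (P0 * p0 l + P1 * p1 (-l)) := by
  rw [mul_eq_exp_mul_of_consistency hP0 hcons, mul_eq_exp_mul_of_consistency hP0 hcons, mul_neg,
    mul_add, ← mul_assoc (exp _) (exp _), ← exp_add, neg_add_cancel, exp_zero, one_mul, add_comm]

end Consistency

theorem asymmetric_ratio_general
    (P0 P1 : ℝ) (hP0 : 0 < P0)
    (c : ℝ)
    (p : Bool → ℝ → ℝ)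
    (hcons : ∀ l : ℝ, p false l = Real.exp (c * l) * (P1 / P0) * p true l)
    (pLa : ℝ → ℝ)
    (hpLa : ∀ l : ℝ, pLa l = P0 * p false l + P1 * p true (-l)) :
    ∀ l : ℝ, 0 < pLa l → pLa (-l) / pLa l = Real.exp (-(c * l)) := by
  intro l hl
  rw [div_eq_iff hl.ne', hpLa, hpLa, neg_neg]
  exact mixture_neg_eq_exp_mul_of_consistency hP0.ne' hcons l

/-- generalized consistency with scaling ratio `c = s_o/s > 0`:
if `p(l|0) = e^{c·l} · (P(1)/P(0)) · p(l|1)`, then the density of the asymmetric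
L-value `L_a = (-1)^B L`, namely `p_{L_a}(l) = P(0)p(l|0) + P(1)p(-l|1)`, satisfies
`p_{L_a}(-l)/p_{L_a}(l) = e^{-c·l}` wherever `p_{L_a}(l) > 0`. -/
theorem asymmetric_ratio
    (P0 P1 : ℝ) (hP0 : 0 < P0) (hP1 : 0 < P1)
    (c : ℝ) (hc : 0 < c)
    (p : Bool → ℝ → ℝ) (hpnn : ∀ b l, 0 ≤ p b l)
    (hcons : ∀ l : ℝ, p false l = Real.exp (c * l) * (P1 / P0) * p true l)
    (pLa : ℝ → ℝ)
    (hpLa : ∀ l : ℝ, pLa l = P0 * p false l + P1 * p true (-l)) :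
    ∀ l : ℝ, 0 < pLa l → pLa (-l) / pLa l = Real.exp (-(c * l)) :=
  asymmetric_ratio_general P0 P1 hP0 c p hcons pLa hpLa
end

section
/- Under the symmetry condition p_{L_a}(-l) = e^{-l} p_{L_a}(l), the asymmetric information satisfies ASI = 1 - h(L_a | |L_a|) = 1 - ∫ p_{L_a}(l) log₂(1 + e^{-l}) dl; equivalently, h(L_a | |L_a|) = E[log₂(1 + exp(-L_a))]. -/
open Real MeasureTheory

/-- under the matched-decoding symmetry `p_{L_a}(-l) = e^{-l} p_{L_a}(l)`,
the conditional differential entropy `h(L_a | |L_a|) = h(L_a) - h(|L_a|)` (base 2,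
with `p_{|L_a|}(l) = p_{L_a}(l)(1 + e^{-l})` for `l ≥ 0`) equals
`E[log₂(1 + exp(-L_a))]`; equivalently `ASI = 1 - ∫ p(l) log₂(1 + e^{-l}) dl`. -/
theorem ASI_conditional_entropy_formula
    (p : ℝ → ℝ) (hppos : ∀ l, 0 < p l) (hdens : ∫ l : ℝ, p l = 1)
    (hsym : ∀ l : ℝ, p (-l) = Real.exp (-l) * p l)
    (hintLa : Integrable (fun l : ℝ => p l * Real.logb 2 (p l)))
    (hintAbs : IntegrableOn
      (fun l : ℝ => (p l * (1 + Real.exp (-l))) *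
        Real.logb 2 (p l * (1 + Real.exp (-l)))) (Set.Ici 0))
    (hintf : Integrable (fun l : ℝ => p l * Real.logb 2 (1 + Real.exp (-l))))
    (hLa hAbs hCond : ℝ)
    (hhLa : hLa = -∫ l : ℝ, p l * Real.logb 2 (p l))
    (hhAbs : hAbs = -∫ l in Set.Ici (0 : ℝ),
      (p l * (1 + Real.exp (-l))) * Real.logb 2 (p l * (1 + Real.exp (-l))))
    (hhCond : hCond = hLa - hAbs) :
    hCond = ∫ l : ℝ, p l * Real.logb 2 (1 + Real.exp (-l)) := by
  set F : ℝ → ℝ := fun l => p l * Real.logb 2 (p l) + p l * Real.logb 2 (1 + Real.exp (-l))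
    with hFdef
  have hF : Integrable F := hintLa.add hintf
  -- key pointwise identity
  have key : ∀ l : ℝ, F l + F (-l) =
      (p l * (1 + Real.exp (-l))) * Real.logb 2 (p l * (1 + Real.exp (-l))) := by
    intro l
    have hp : p l ≠ 0 := (hppos l).ne'
    have he : (0:ℝ) < Real.exp (-l) := Real.exp_pos _
    have h1 : (1:ℝ) + Real.exp (-l) ≠ 0 := by linarith
    have hel : Real.exp l ≠ 0 := (Real.exp_pos l).ne'
    have h2 : (1:ℝ) + Real.exp (- -l) = Real.exp l * (1 + Real.exp (-l)) := by
      rw [neg_neg, mul_add, mul_one, ← Real.exp_add]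
      simp [Real.exp_zero]
      ring
    simp only [hFdef, hsym l, h2]
    simp only [Real.logb, Real.log_mul (Real.exp_ne_zero _) hp,
      Real.log_mul hel h1, Real.log_mul hp h1, Real.log_exp]
    ring
  -- fold the integral of F over ℝ onto [0, ∞)
  have hFneg : Integrable (fun l : ℝ => F (-l)) := hF.comp_neg
  have fold : ∫ l in Set.Ici (0:ℝ),
      (p l * (1 + Real.exp (-l))) * Real.logb 2 (p l * (1 + Real.exp (-l)))
      = ∫ l : ℝ, F l := by
    have e1 : ∫ l in Set.Ici (0:ℝ),
        (p l * (1 + Real.exp (-l))) * Real.logb 2 (p l * (1 + Real.exp (-l)))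
        = ∫ l in Set.Ici (0:ℝ), (F l + F (-l)) := by
      refine integral_congr_ae (Filter.Eventually.of_forall fun l => (key l).symm)
    rw [e1, integral_add hF.integrableOn hFneg.integrableOn]
    have e2 : ∫ l in Set.Ici (0:ℝ), F (-l) = ∫ l in Set.Iic (0:ℝ), F l := by
      rw [integral_Ici_eq_integral_Ioi]
      simpa using integral_comp_neg_Ioi (c := 0) F
    rw [e2, integral_Ici_eq_integral_Ioi, add_comm]
    exact intervalIntegral.integral_Iic_add_Ioi hF.integrableOn hF.integrableOn
  have hFsplit : ∫ l : ℝ, F l =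
      (∫ l : ℝ, p l * Real.logb 2 (p l)) +
      ∫ l : ℝ, p l * Real.logb 2 (1 + Real.exp (-l)) :=
    integral_add hintLa hintf
  rw [hhCond, hhLa, hhAbs, fold, hFsplit]
  ring
end

section
/- Under matched decoding (GMI computed with the true channel and s_o = 1), the GMI relation GMI = Δ_H holds, i.e., E[log₂( p_{Y|B}(Y|B)/Σ_b P_B(b) p_{Y|B}(Y|b) )] with the factorized bitwise auxiliary channel equals H(B) - Σᵢ H(Bᵢ|Y), where the auxiliary channel is q_{Y|B}(y|b) = (∏ᵢP_{Bᵢ}(bᵢ)/P_B(b)) ∏ᵢ p_{Y|Bᵢ}(y|bᵢ) with true bitwise channels p_{Y|Bᵢ}. -/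
/-!
With the true bitwise channels, `P_B(b) q(y|b) = ∏ᵢ P(Bᵢ = bᵢ, Y = y)`, so the denominator
`Σ_b P_B(b) q(y|b)` factorises over the bits into `P_Y(y)^m`. The GMI integrand is therefore
`Σᵢ log P(Bᵢ = bᵢ | Y = y) - log P_B(b)`, whose expectation is `-Σᵢ H(Bᵢ|Y) + H(B)`.
-/

open Real Finset

section FiberSum

variable {ι β : Type*} [Fintype ι] [DecidableEq ι] [Fintype β] [DecidableEq β]

def fiberSum {M : Type*} [AddCommMonoid M] (f : (ι → β) → M) (i : ι) (c : β) : M :=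
  ∑ b with b i = c, f b

lemma fiberSum_pos {f : (ι → β) → ℝ} (hf : ∀ b, 0 < f b) (i : ι) (c : β) :
    0 < fiberSum f i c :=
  sum_pos (fun b _ => hf b) ⟨fun _ => c, by simp⟩

lemma sum_fiberSum {M : Type*} [AddCommMonoid M] (f : (ι → β) → M) (i : ι) :
    ∑ c, fiberSum f i c = ∑ b, f b :=
  sum_fiberwise _ _ _

lemma sum_mul_apply_eq_sum_fiberSum_mul (f : (ι → β) → ℝ) (g : β → ℝ) (i : ι) :
    ∑ b, f b * g (b i) = ∑ c, fiberSum f i c * g c := by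
  rw [← sum_fiberwise univ (fun b : ι → β => b i)]
  refine sum_congr rfl fun c _ => ?_
  rw [fiberSum, sum_mul]
  exact sum_congr rfl fun b hb => by rw [(mem_filter.1 hb).2]

lemma sum_prod_fiberSum_apply (f : (ι → β) → ℝ) :
    ∑ b : ι → β, ∏ i, fiberSum f i (b i) = (∑ b, f b) ^ Fintype.card ι := by
  rw [← Fintype.prod_sum (fun i c => fiberSum f i c), ← card_univ, ← prod_const]
  exact prod_congr rfl fun i _ => sum_fiberSum f i

lemma sum_sum_mul_sum_apply_eq_sum_fiberSum_mul {α : Type*} [Fintype α]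
    (f : (ι → β) → α → ℝ) (L : ι → β → α → ℝ) :
    ∑ b : ι → β, ∑ y, f b y * ∑ i, L i (b i) y
      = ∑ i, ∑ c : β, ∑ y, fiberSum (f · y) i c * L i c y := calc
  _ = ∑ i, ∑ y, ∑ b : ι → β, f b y * L i (b i) y := by
    simp_rw [mul_sum]
    exact (sum_congr rfl fun b _ => sum_comm).trans
      (sum_comm.trans (sum_congr rfl fun i _ => sum_comm))
  _ = _ := sum_congr rfl fun i _ =>
    (sum_congr rfl fun y _ => sum_mul_apply_eq_sum_fiberSum_mul (f · y) (L i · y) i).trans sum_comm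

end FiberSum

section

variable {ι : Type*} [Fintype ι]

lemma mul_div_mul_prod_div_cancel {d : ℝ} {P : ι → ℝ} (S : ι → ℝ) (hd : d ≠ 0)
    (hP : ∀ i, P i ≠ 0) :
    d * ((∏ i, P i) / d * ∏ i, S i / P i) = ∏ i, S i := by
  have : ∏ i, P i ≠ 0 := prod_ne_zero_iff.2 fun i _ => hP i
  rw [prod_div_distrib]
  field_simp

lemma logb_prod_div_div_pow (B : ℝ) {x : ι → ℝ} {d a : ℝ} (hx : ∀ i, 0 < x i) (hd : 0 < d)
    (ha : 0 < a) :
    logb B ((∏ i, x i) / d / a ^ Fintype.card ι) = ∑ i, logb B (x i / a) - logb B d := by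
  have hxa : ∀ i, 0 < x i / a := fun i => div_pos (hx i) ha
  rw [div_right_comm, ← card_univ, ← prod_const, ← prod_div_distrib,
    logb_div (prod_pos fun i _ => hxa i).ne' hd.ne', logb_prod _ _ fun i _ => (hxa i).ne']

end

theorem GMI_eq_DeltaH_matched_general
    (m : ℕ)
    {𝒴 : Type*} [Fintype 𝒴] [Nonempty 𝒴]
    (p : (Fin m → Bool) → 𝒴 → ℝ)
    (hppos : ∀ b y, 0 < p b y)
    (PB : (Fin m → Bool) → ℝ) (hPB : ∀ b, PB b = ∑ y, p b y)
    (Pm : Fin m → Bool → ℝ)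
    (hPm : ∀ i c, Pm i c = ∑ b ∈ Finset.univ.filter (fun b => b i = c), PB b)
    (PY : 𝒴 → ℝ) (hPY : ∀ y, PY y = ∑ b, p b y)
    (pYBi : Fin m → Bool → 𝒴 → ℝ)
    (hpYBi : ∀ i c y, pYBi i c y
      = (∑ b ∈ Finset.univ.filter (fun b => b i = c), p b y) / Pm i c)
    (Q : (Fin m → Bool) → 𝒴 → ℝ)
    (hQ : ∀ b y, Q b y = ((∏ i, Pm i (b i)) / PB b) * ∏ i, pYBi i (b i) y)
    (GMI : ℝ)
    (hGMI : GMI = ∑ b, ∑ y, p b y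
      * Real.logb 2 (Q b y / ∑ b', PB b' * Q b' y))
    (HB : ℝ) (hHB : HB = -∑ b, PB b * Real.logb 2 (PB b))
    (HBiY : Fin m → ℝ)
    (hHBiY : ∀ i, HBiY i = -∑ c : Bool, ∑ y,
      (∑ b ∈ Finset.univ.filter (fun b => b i = c), p b y)
        * Real.logb 2 ((∑ b ∈ Finset.univ.filter (fun b => b i = c), p b y) / PY y)) :
    GMI = HB - ∑ i, HBiY i := by
  have hPBpos : ∀ b, 0 < PB b := fun b =>
    hPB b ▸ sum_pos (fun y _ => hppos b y) univ_nonempty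
  have hPYpos : ∀ y, 0 < PY y := fun y =>
    hPY y ▸ sum_pos (fun b _ => hppos b y) univ_nonempty
  have hPmpos : ∀ i c, 0 < Pm i c := fun i c => by
    rw [hPm]
    exact fiberSum_pos hPBpos i c
  have hPBQ : ∀ b y, PB b * Q b y = ∏ i, fiberSum (p · y) i (b i) := fun b y => by
    rw [hQ]
    simp only [hpYBi]
    exact mul_div_mul_prod_div_cancel _ (hPBpos b).ne' fun i => (hPmpos i (b i)).ne'
  have hden : ∀ y, ∑ b, PB b * Q b y = PY y ^ Fintype.card (Fin m) := fun y => by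
    simp only [hPBQ]
    rw [sum_prod_fiberSum_apply, hPY]
  have hlog : ∀ b y, logb 2 (Q b y / ∑ b', PB b' * Q b' y)
      = ∑ i, logb 2 (fiberSum (p · y) i (b i) / PY y) - logb 2 (PB b) := fun b y => by
    rw [hden, eq_div_of_mul_eq (hPBpos b).ne' ((mul_comm _ _).trans (hPBQ b y))]
    exact logb_prod_div_div_pow 2 (fun i => fiberSum_pos (hppos · y) i (b i))
      (hPBpos b) (hPYpos y)
  rw [hGMI, hHB]
  simp only [hHBiY, hlog, mul_sub, sum_sub_distrib, ← sum_mul, ← hPB]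
  rw [sum_sum_mul_sum_apply_eq_sum_fiberSum_mul p
    fun i c y => logb 2 (fiberSum (p · y) i c / PY y)]
  simp only [sum_neg_distrib, sub_neg_eq_add]
  -- `fiberSum (p · y) i c` is definitionally the filtered sum appearing in `hHBiY`
  exact sub_eq_neg_add _ _

/-- under matched decoding (`s_o = 1`, bitwise auxiliary channels equal
to the true bitwise channels), the GMI with the product-factorized auxiliary channel
`q_{Y|B}(y|b) = (∏ᵢP_{Bᵢ}(bᵢ)/P_B(b)) ∏ᵢ p_{Y|Bᵢ}(y|bᵢ)` equals
`Δ_H = H(B) - Σᵢ H(Bᵢ|Y)`. Modeled with a finite output alphabet `𝒴` and strictly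
positive joint pmf `p`. -/
theorem GMI_eq_DeltaH_matched
    (m : ℕ) (hm : 0 < m)
    {𝒴 : Type*} [Fintype 𝒴] [Nonempty 𝒴]
    (p : (Fin m → Bool) → 𝒴 → ℝ)
    (hppos : ∀ b y, 0 < p b y)
    (hpsum : ∑ b, ∑ y, p b y = 1)
    (PB : (Fin m → Bool) → ℝ) (hPB : ∀ b, PB b = ∑ y, p b y)
    (Pm : Fin m → Bool → ℝ)
    (hPm : ∀ i c, Pm i c = ∑ b ∈ Finset.univ.filter (fun b => b i = c), PB b)
    (PY : 𝒴 → ℝ) (hPY : ∀ y, PY y = ∑ b, p b y)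
    (pYBi : Fin m → Bool → 𝒴 → ℝ)
    (hpYBi : ∀ i c y, pYBi i c y
      = (∑ b ∈ Finset.univ.filter (fun b => b i = c), p b y) / Pm i c)
    (Q : (Fin m → Bool) → 𝒴 → ℝ)
    (hQ : ∀ b y, Q b y = ((∏ i, Pm i (b i)) / PB b) * ∏ i, pYBi i (b i) y)
    (GMI : ℝ)
    (hGMI : GMI = ∑ b, ∑ y, p b y
      * Real.logb 2 (Q b y / ∑ b', PB b' * Q b' y))
    (HB : ℝ) (hHB : HB = -∑ b, PB b * Real.logb 2 (PB b))
    (HBiY : Fin m → ℝ)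
    (hHBiY : ∀ i, HBiY i = -∑ c : Bool, ∑ y,
      (∑ b ∈ Finset.univ.filter (fun b => b i = c), p b y)
        * Real.logb 2 ((∑ b ∈ Finset.univ.filter (fun b => b i = c), p b y) / PY y)) :
    GMI = HB - ∑ i, HBiY i :=
  GMI_eq_DeltaH_matched_general m p hppos PB hPB Pm hPm PY hPY pYBi hpYBi Q hQ GMI hGMI HB hHB HBiY
    hHBiY
end
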